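/- With the setup of the RWRE change-of-measure identity, for any N ≥ 1 and y ∈ ℤ: P^{ω,ε}(S_N = y) = P⁰(S_N = y) + Σ_{k=1}^{N} ε^{k/2} Σ_{(z₁,…,zₖ)} ψₖ(z₁,…,zₖ)·ω_{z₁}⋯ω_{zₖ}, where the inner sum runs over 0 ≤ i₁ < ⋯ < iₖ ≤ N-1 and j₁,…,jₖ ∈ ℤ with z_l = (i_l, j_l), and ψₖ(z₁,…,zₖ) = 2^{-k}·P⁰(S_{i₁} = j₁)·∏_{l=2}^{k}[P⁰(S_{i_l - i_{l-1} - 1} = j_l - j_{l-1} - 1) - P⁰(S_{i_l - i_{l-1} - 1} = j_l - j_{l-1} + 1)]·[P⁰(S_{N - iₖ - 1} = y - jₖ - 1) - P⁰(S_{N - iₖ - 1} = y - jₖ + 1)]. -/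

import Mathlib

/-- A `±1` step encoded by a Boolean (`true` = up). -/
def stepZ (b : Bool) : ℤ := if b then 1 else -1

/-- Position at time `n` of the nearest-neighbor path with steps `σ`, started at `0`. -/
def walk {N : ℕ} (σ : Fin N → Bool) (n : ℕ) : ℤ :=
  ∑ i : Fin N, if (i : ℕ) < n then stepZ (σ i) else 0

/-- The quenched RWRE transition probability `P^{ω,ε}(S_N = y)`. -/
noncomputable def quenchedProb (ω : ℕ → ℤ → ℝ) (ε : ℝ) (N : ℕ) (y : ℤ) : ℝ :=
  ∑ σ : Fin N → Bool,
    if walk σ N = y then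
      ∏ i : Fin N, (1 + (stepZ (σ i) : ℝ) * Real.sqrt ε * ω i (walk σ i)) / 2
    else 0

/-- The SSRW transition probability `P⁰(S_n = m)`. -/
noncomputable def ssrwProb (n : ℕ) (m : ℤ) : ℝ :=
  ((Finset.univ.filter fun σ : Fin n → Bool =>
      (∑ i : Fin n, if σ i then (1 : ℤ) else -1) = m).card : ℝ) / 2 ^ n

/-- `P⁰(S_n = d - 1) - P⁰(S_n = d + 1)`. -/
noncomputable def Dker (n : ℕ) (d : ℤ) : ℝ := ssrwProb n (d - 1) - ssrwProb n (d + 1)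

/-- The coefficient `ψ_{k+1}(z₁,…,z_{k+1})` of the polynomial chaos expansion, for
times `0 ≤ i₁ < ⋯ < i_{k+1} ≤ N-1` (encoded as `i : Fin (k+1) → Fin N`) and space
points `j : Fin (k+1) → ℤ`. -/
noncomputable def psiCoef (N : ℕ) (y : ℤ) (k : ℕ)
    (i : Fin (k + 1) → Fin N) (j : Fin (k + 1) → ℤ) : ℝ :=
  (1 / 2 ^ (k + 1)) * ssrwProb (i 0) (j 0) *
    (∏ l : Fin k,
      Dker ((i l.succ : ℕ) - (i l.castSucc : ℕ) - 1) (j l.succ - j l.castSucc)) *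
    Dker (N - (i (Fin.last k) : ℕ) - 1) (y - j (Fin.last k))

/-!
Both sides satisfy the recursion obtained by conditioning on the last step,
`f (N+1) y = (1 + √ε ω_N(y-1))/2 · f N (y-1) + (1 - √ε ω_N(y+1))/2 · f N (y+1)`,
and agree at `N = 0`. On the chaos side, split the times `i₁ < ⋯ < iₖ ≤ N` according to
whether `iₖ = N`. If not, the last kernel `Dker` obeys the SSRW recursion in `N`. If so, the
last factor is `Dker 0 (y - jₖ)`, which picks `jₖ = y ∓ 1` with sign `±` and produces the
`ω_N` term. The sums over the space points `j` are finite because `ψ` vanishes unless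
`|j_l| ≤ (l+1)N`.
-/

open Finset

lemma sum_fun_fin_succ {M α : Type*} [AddCommMonoid M] [Fintype α] {N : ℕ}
    (f : (Fin (N + 1) → α) → M) :
    ∑ σ, f σ = ∑ σ : Fin N → α, ∑ b, f (Fin.snoc σ b) := by
  rw [← (Fin.snocEquiv fun _ => α).sum_comp, Fintype.sum_prod_type, sum_comm]
  rfl

lemma Summable.tsum_fun_fin_succ {α E : Type*} [AddCommGroup E] [UniformSpace E]
    [IsUniformAddGroup E] [CompleteSpace E] [T0Space E] {n : ℕ} {F : (Fin (n + 1) → α) → E}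
    (hF : Summable F) : ∑' j, F j = ∑' b, ∑' j : Fin n → α, F (Fin.snoc j b) := by
  rw [← (Fin.snocEquiv fun _ => α).tsum_eq]
  exact ((Fin.snocEquiv _).summable_iff.mpr hF).tsum_prod

lemma Fin.strictMono_snoc {α : Type*} [Preorder α] {m : ℕ} {g : Fin m → α}
    (hg : StrictMono g) {x : α} (hx : ∀ l, g l < x) :
    StrictMono (Fin.snoc g x : Fin (m + 1) → α) := by
  intro p q hpq
  induction q using Fin.lastCases with
  | last =>
    obtain ⟨p, rfl⟩ := Fin.eq_castSucc_of_ne_last (Fin.ne_last_of_lt hpq)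
    simpa using hx p
  | cast q =>
    obtain ⟨p, rfl⟩ := Fin.eq_castSucc_of_ne_last (Fin.ne_last_of_lt hpq)
    simpa using hg (Fin.castSucc_lt_castSucc_iff.mp hpq)

def strictMonoTuples (m N : ℕ) : Finset (Fin m → Fin N) :=
  univ.filter fun i => ∀ a b, a < b → i a < i b

lemma mem_strictMonoTuples {m N : ℕ} {i : Fin m → Fin N} :
    i ∈ strictMonoTuples m N ↔ StrictMono i := by
  simp [strictMonoTuples, StrictMono]

lemma strictMonoTuples_eq_empty {m N : ℕ} (h : N < m) : strictMonoTuples m N = ∅ :=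
  eq_empty_of_forall_notMem fun i hi => h.not_ge <| by
    simpa using Fintype.card_le_of_injective i (mem_strictMonoTuples.mp hi).injective

section

variable {M : Type*} [AddCommMonoid M] {m N : ℕ}

lemma sum_strictMonoTuples_filter_ne_last (f : (Fin (m + 1) → Fin (N + 1)) → M) :
    ∑ i ∈ strictMonoTuples (m + 1) (N + 1) with i (Fin.last m) ≠ Fin.last N, f i =
      ∑ i ∈ strictMonoTuples (m + 1) N, f (Fin.castSucc ∘ i) := by
  have hne : ∀ i ∈ {i ∈ strictMonoTuples (m + 1) (N + 1) | i (Fin.last m) ≠ Fin.last N},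
      ∀ l, i l ≠ Fin.last N := by
    simp only [mem_filter, mem_strictMonoTuples, ← Fin.lt_last_iff_ne_last]
    exact fun i ⟨hi, hlast⟩ l => (hi.monotone (Fin.le_last l)).trans_lt hlast
  refine (sum_bij' (fun i _ => Fin.castSucc ∘ i)
    (fun i hi l => (i l).castPred (hne i hi l)) ?_ ?_ ?_ ?_ ?_).symm
  · intro i hi
    simp only [mem_strictMonoTuples, mem_filter] at hi ⊢
    exact ⟨Fin.strictMono_castSucc.comp hi, (Fin.castSucc_lt_last _).ne⟩
  · intro i hi
    simp only [mem_strictMonoTuples, mem_filter] at hi ⊢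
    exact Fin.strictMono_castPred_comp _ hi.1
  all_goals intros; rfl

lemma sum_strictMonoTuples_filter_eq_last (f : (Fin (m + 1) → Fin (N + 1)) → M) :
    ∑ i ∈ strictMonoTuples (m + 1) (N + 1) with i (Fin.last m) = Fin.last N, f i =
      ∑ i ∈ strictMonoTuples m N, f (Fin.snoc (Fin.castSucc ∘ i) (Fin.last N)) := by
  have hne : ∀ i ∈ {i ∈ strictMonoTuples (m + 1) (N + 1) | i (Fin.last m) = Fin.last N},
      ∀ l, i (Fin.castSucc l) ≠ Fin.last N := by
    simp only [mem_filter, mem_strictMonoTuples, ← Fin.lt_last_iff_ne_last]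
    exact fun i ⟨hi, hlast⟩ l => hlast ▸ hi (Fin.castSucc_lt_last l)
  refine (sum_bij' (fun i _ => Fin.snoc (Fin.castSucc ∘ i) (Fin.last N))
    (fun i hi l => (i (Fin.castSucc l)).castPred (hne i hi l)) ?_ ?_ ?_ ?_ ?_).symm
  · intro i hi
    simp only [mem_strictMonoTuples, mem_filter] at hi ⊢
    exact ⟨Fin.strictMono_snoc (Fin.strictMono_castSucc.comp hi) fun l => Fin.castSucc_lt_last _,
      Fin.snoc_last _ _⟩
  · intro i hi
    simp only [mem_strictMonoTuples, mem_filter] at hi ⊢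
    exact Fin.strictMono_castPred_comp _ (hi.1.comp Fin.strictMono_castSucc)
  · intros; ext; simp
  · intro i hi
    ext l
    induction l using Fin.lastCases <;> simp [(mem_filter.mp hi).2]
  · intros; rfl

lemma sum_strictMonoTuples_succ (f : (Fin (m + 1) → Fin (N + 1)) → M) :
    ∑ i ∈ strictMonoTuples (m + 1) (N + 1), f i =
      ∑ i ∈ strictMonoTuples (m + 1) N, f (Fin.castSucc ∘ i) +
        ∑ i ∈ strictMonoTuples m N, f (Fin.snoc (Fin.castSucc ∘ i) (Fin.last N)) := by
  rw [← sum_filter_not_add_sum_filter _ (fun i => i (Fin.last m) = Fin.last N)]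
  exact congrArg₂ (· + ·) (sum_strictMonoTuples_filter_ne_last f)
    (sum_strictMonoTuples_filter_eq_last f)

end

lemma sum_range_pow_mul_of_recursion {a b c : ℕ → ℝ} {u v s : ℝ} {M : ℕ}
    (h0 : a 0 = (b 0 + c 0) / 2)
    (hsucc : ∀ k, a (k + 1) = (b (k + 1) + c (k + 1)) / 2 + (u * b k - v * c k) / 2)
    (hb : b M = 0) (hc : c M = 0) :
    ∑ k ∈ range (M + 1), s ^ k * a k =
      (1 + s * u) / 2 * ∑ k ∈ range M, s ^ k * b k +
        (1 - s * v) / 2 * ∑ k ∈ range M, s ^ k * c k := by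
  calc ∑ k ∈ range (M + 1), s ^ k * a k
      = ∑ k ∈ range (M + 1), s ^ k * ((b k + c k) / 2) +
          ∑ k ∈ range M, s ^ (k + 1) * ((u * b k - v * c k) / 2) := by
        rw [sum_range_succ' (fun k => s ^ k * a k),
          sum_range_succ' (fun k => s ^ k * ((b k + c k) / 2))]
        simp only [hsucc, h0, mul_add, sum_add_distrib]
        ring
    _ = _ := by
        rw [sum_range_succ, hb, hc, mul_sum, mul_sum, add_zero, zero_div, mul_zero, add_zero,
          ← sum_add_distrib, ← sum_add_distrib]
        refine sum_congr rfl fun k _ => ?_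
        ring

lemma walk_snoc_of_le {N : ℕ} (σ : Fin N → Bool) (b : Bool) {n : ℕ} (hn : n ≤ N) :
    walk (Fin.snoc σ b : Fin (N + 1) → Bool) n = walk σ n := by
  simp [walk, Fin.sum_univ_castSucc, hn]

lemma walk_snoc_last {N : ℕ} (σ : Fin N → Bool) (b : Bool) :
    walk (Fin.snoc σ b : Fin (N + 1) → Bool) (N + 1) = walk σ N + stepZ b := by
  simp [walk, Fin.sum_univ_castSucc]

lemma walk_self_eq_sum {N : ℕ} (σ : Fin N → Bool) :
    walk σ N = ∑ i : Fin N, if σ i then (1 : ℤ) else -1 := by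
  simp [walk, stepZ]

lemma quenchedProb_zero (ω : ℕ → ℤ → ℝ) (ε : ℝ) (y : ℤ) :
    quenchedProb ω ε 0 y = if y = 0 then 1 else 0 := by
  simp [quenchedProb, walk, eq_comm]

lemma quenchedProb_succ (ω : ℕ → ℤ → ℝ) (ε : ℝ) (N : ℕ) (y : ℤ) :
    quenchedProb ω ε (N + 1) y =
      (1 + √ε * ω N (y - 1)) / 2 * quenchedProb ω ε N (y - 1) +
        (1 - √ε * ω N (y + 1)) / 2 * quenchedProb ω ε N (y + 1) := by
  have hstep : ∀ (b : Bool) (σ : Fin N → Bool) (w : ℝ), (if walk σ N + stepZ b = y then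
      w * ((1 + (stepZ b : ℝ) * √ε * ω N (walk σ N)) / 2) else 0) =
      (1 + (stepZ b : ℝ) * √ε * ω N (y - stepZ b)) / 2 *
        (if walk σ N = y - stepZ b then w else 0) := by
    intro b σ w
    by_cases h : walk σ N = y - stepZ b
    · simp [h, mul_comm]
    · rw [if_neg (by omega), if_neg h, mul_zero]
  unfold quenchedProb
  rw [sum_fun_fin_succ]
  simp only [walk_snoc_last, Fin.prod_univ_castSucc, Fin.snoc_castSucc, Fin.snoc_last,
    Fin.val_castSucc, Fin.val_last, walk_snoc_of_le _ _ le_rfl,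
    walk_snoc_of_le _ _ (Fin.is_lt _).le, hstep]
  rw [sum_comm, Fintype.sum_bool, ← mul_sum, ← mul_sum]
  simp only [stepZ, if_true, Bool.false_eq_true, if_false, Int.cast_one, Int.cast_neg, one_mul,
    neg_mul, sub_neg_eq_add, ← sub_eq_add_neg]

lemma ssrwProb_eq_quenchedProb (N : ℕ) (m : ℤ) :
    ssrwProb N m = quenchedProb (fun _ _ => 0) 0 N m := by
  simp only [ssrwProb, quenchedProb, walk_self_eq_sum, mul_zero, add_zero, prod_const,
    card_univ, Fintype.card_fin, ← sum_filter, sum_const, nsmul_eq_mul, div_eq_mul_inv, one_mul,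
    inv_pow]

lemma ssrwProb_zero (m : ℤ) : ssrwProb 0 m = if m = 0 then 1 else 0 := by
  rw [ssrwProb_eq_quenchedProb, quenchedProb_zero]

lemma ssrwProb_succ (N : ℕ) (m : ℤ) :
    ssrwProb (N + 1) m = (ssrwProb N (m - 1) + ssrwProb N (m + 1)) / 2 := by
  simp only [ssrwProb_eq_quenchedProb, quenchedProb_succ]
  ring

lemma ssrwProb_eq_zero_of_lt {n : ℕ} {m : ℤ} (h : (n : ℤ) < |m|) : ssrwProb n m = 0 := by
  suffices hempty : univ.filter (fun σ : Fin n → Bool =>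
      (∑ i : Fin n, if σ i then (1 : ℤ) else -1) = m) = ∅ by
    simp [ssrwProb, hempty]
  refine filter_false_of_mem fun σ _ hσ => h.not_ge ?_
  calc |m| ≤ ∑ i : Fin n, |if σ i then (1 : ℤ) else -1| := hσ ▸ abs_sum_le_sum_abs _ _
    _ = n := by simp [apply_ite]

lemma Dker_succ (n : ℕ) (d : ℤ) :
    Dker (n + 1) d = (Dker n (d - 1) + Dker n (d + 1)) / 2 := by
  simp only [Dker, ssrwProb_succ, sub_add_cancel, add_sub_cancel_right]
  ring

lemma Dker_eq_zero_of_lt {n : ℕ} {d : ℤ} (h : (n : ℤ) + 1 < |d|) : Dker n d = 0 := by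
  rw [Dker, ssrwProb_eq_zero_of_lt, ssrwProb_eq_zero_of_lt, sub_zero] <;>
    cases abs_cases d <;> cases abs_cases (d + 1) <;> cases abs_cases (d - 1) <;> omega

lemma tsum_mul_Dker_zero (g : ℤ → ℝ) (y : ℤ) :
    ∑' b, g b * Dker 0 (y - b) = g (y - 1) - g (y + 1) := by
  have hDker : ∀ d, Dker 0 d = (if d = 1 then 1 else 0) - if d = -1 then 1 else 0 := by
    simp only [Dker, ssrwProb_zero, sub_eq_zero, add_eq_zero_iff_eq_neg, implies_true]
  rw [tsum_eq_sum (s := {y - 1, y + 1}), sum_pair (by omega)]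
  · rw [sub_sub_cancel, sub_add_cancel_left, hDker, hDker]
    norm_num
    ring
  · intro b hb
    simp only [mem_insert, mem_singleton] at hb
    rw [hDker, if_neg (by omega), if_neg (by omega), sub_zero, mul_zero]

lemma psiCoef_castSucc {N k : ℕ} (y : ℤ) (i : Fin (k + 1) → Fin N) (j : Fin (k + 1) → ℤ) :
    psiCoef (N + 1) y k (Fin.castSucc ∘ i) j =
      (psiCoef N (y - 1) k i j + psiCoef N (y + 1) k i j) / 2 := by
  have hlast : N + 1 - (i (Fin.last k) : ℕ) - 1 = N - (i (Fin.last k) : ℕ) - 1 + 1 := by omega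
  simp only [psiCoef, Function.comp_apply, Fin.val_castSucc, hlast, Dker_succ]
  ring_nf

lemma psiCoef_snoc {N k : ℕ} (y b : ℤ) (i : Fin (k + 1) → Fin N) (j : Fin (k + 1) → ℤ) :
    psiCoef (N + 1) y (k + 1) (Fin.snoc (Fin.castSucc ∘ i) (Fin.last N)) (Fin.snoc j b) =
      psiCoef N b k i j * Dker 0 (y - b) / 2 := by
  have h0 : (0 : Fin (k + 2)) = Fin.castSucc 0 := rfl
  simp only [psiCoef, Fin.prod_univ_castSucc, h0, Fin.succ_castSucc, Fin.succ_last,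
    Fin.snoc_castSucc, Fin.snoc_last,
    Function.comp_apply, Fin.val_castSucc, Fin.val_last, Nat.add_sub_cancel_left, Nat.sub_self]
  ring

lemma abs_le_of_psiCoef_ne_zero {N k : ℕ} {y : ℤ} {i : Fin (k + 1) → Fin N}
    {j : Fin (k + 1) → ℤ} (h : psiCoef N y k i j ≠ 0) (l : Fin (k + 1)) :
    |j l| ≤ ((l : ℕ) + 1) * N := by
  have hfirst : ssrwProb (i 0) (j 0) ≠ 0 := fun h0 => h (by simp [psiCoef, h0])
  have hgap : ∀ l : Fin k, |j l.succ - j l.castSucc| ≤ N := fun l => by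
    have hD : Dker ((i l.succ : ℕ) - (i l.castSucc : ℕ) - 1) (j l.succ - j l.castSucc) ≠ 0 :=
      fun h0 => h (by rw [psiCoef, prod_eq_zero (mem_univ l) h0]; ring)
    have := (i l.succ).is_lt
    have := not_lt.mp (mt Dker_eq_zero_of_lt hD)
    omega
  induction l using Fin.induction with
  | zero =>
    have := not_lt.mp (mt ssrwProb_eq_zero_of_lt hfirst)
    have := (i 0).is_lt
    simp only [Fin.val_zero]
    omega
  | succ l ih =>
    have := hgap l
    have := abs_sub_abs_le_abs_sub (j l.succ) (j l.castSucc)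
    simp only [Fin.val_succ, Fin.val_castSucc] at ih ⊢
    push_cast at ih ⊢
    linarith

lemma summable_psiCoef_mul {N k : ℕ} (y : ℤ) (i : Fin (k + 1) → Fin N)
    (g : (Fin (k + 1) → ℤ) → ℝ) : Summable fun j => psiCoef N y k i j * g j := by
  set R : ℤ := (k + 1) * N
  refine summable_of_ne_finset_zero (s := Fintype.piFinset fun _ => Icc (-R) R) ?_
  intro j hj
  by_contra hne
  refine hj (Fintype.mem_piFinset.mpr fun l => mem_Icc.mpr (abs_le.mp ?_))
  have hl := abs_le_of_psiCoef_ne_zero (left_ne_zero_of_mul hne) l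
  have : ((l : ℕ) + 1 : ℤ) * N ≤ R := by
    have := l.is_lt
    exact mul_le_mul_of_nonneg_right (by omega) (by positivity)
  linarith

section

variable (ω : ℕ → ℤ → ℝ)

/-- The degree-`k` chaos `∑_z ψ_k(z) ω_z`, where `ψ_{k+1}` is `psiCoef N y k`; the degree-`0`
chaos is `P⁰(S_N = y)`. -/
noncomputable def chaosTerm (N : ℕ) (y : ℤ) : ℕ → ℝ
  | 0 => ssrwProb N y
  | k + 1 => ∑ i ∈ strictMonoTuples (k + 1) N,
      ∑' j : Fin (k + 1) → ℤ, psiCoef N y k i j * ∏ l, ω (i l) (j l)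

lemma chaosTerm_eq_zero_of_le {N k : ℕ} (y : ℤ) (h : N ≤ k) :
    chaosTerm ω N y (k + 1) = 0 := by
  simp [chaosTerm, strictMonoTuples_eq_empty (Nat.lt_succ_of_le h)]

lemma tsum_psiCoef_castSucc {N k : ℕ} (y : ℤ) (i : Fin (k + 1) → Fin N) :
    ∑' j, psiCoef (N + 1) y k (Fin.castSucc ∘ i) j * ∏ l, ω (Fin.castSucc (i l)) (j l) =
      ((∑' j, psiCoef N (y - 1) k i j * ∏ l, ω (i l) (j l)) +
        ∑' j, psiCoef N (y + 1) k i j * ∏ l, ω (i l) (j l)) / 2 := by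
  rw [← Summable.tsum_add (summable_psiCoef_mul _ _ _) (summable_psiCoef_mul _ _ _),
    ← tsum_div_const]
  congr 1 with j
  rw [psiCoef_castSucc]
  simp only [Fin.val_castSucc]
  ring

lemma tsum_psiCoef_snoc_zero (N : ℕ) (y : ℤ) (i : Fin 0 → Fin N) :
    ∑' j : Fin 1 → ℤ, psiCoef (N + 1) y 0 (Fin.snoc (Fin.castSucc ∘ i) (Fin.last N)) j *
        ∏ l, ω ((Fin.snoc (Fin.castSucc ∘ i) (Fin.last N) : Fin 1 → Fin (N + 1)) l) (j l) =
      (ω N (y - 1) * ssrwProb N (y - 1) - ω N (y + 1) * ssrwProb N (y + 1)) / 2 := by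
  have hsnoc : (Fin.snoc (Fin.castSucc ∘ i) (Fin.last N) : Fin 1 → Fin (N + 1)) 0 =
      Fin.last N :=
    Fin.snoc_last _ _
  rw [← (Equiv.funUnique (Fin 1) ℤ).symm.tsum_eq, sub_div,
    ← tsum_mul_Dker_zero (fun b => ω N b * ssrwProb N b / 2)]
  congr 1 with b
  simp only [psiCoef, Nat.reduceAdd, Fin.isValue, hsnoc, Fin.val_last, Equiv.funUnique_symm_apply,
    uniqueElim_const, univ_eq_empty, prod_empty, mul_one, Fin.last_zero, add_tsub_cancel_left,
    tsub_self, univ_unique, Fin.default_eq_zero, prod_singleton]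
  ring

lemma tsum_psiCoef_snoc {N k : ℕ} (y : ℤ) (i : Fin (k + 1) → Fin N) :
    ∑' j, psiCoef (N + 1) y (k + 1) (Fin.snoc (Fin.castSucc ∘ i) (Fin.last N)) j *
        ∏ l, ω ((Fin.snoc (Fin.castSucc ∘ i) (Fin.last N) : Fin (k + 2) → Fin (N + 1)) l)
          (j l) =
      (ω N (y - 1) * (∑' j, psiCoef N (y - 1) k i j * ∏ l, ω (i l) (j l)) -
        ω N (y + 1) * ∑' j, psiCoef N (y + 1) k i j * ∏ l, ω (i l) (j l)) / 2 := by
  have hweight : ∀ j b, ∏ l, ω ((Fin.snoc (Fin.castSucc ∘ i) (Fin.last N) :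
      Fin (k + 2) → Fin (N + 1)) l) (Fin.snoc j b l) = (∏ l, ω (i l) (j l)) * ω N b := by
    intro j b
    rw [Fin.prod_univ_castSucc]
    simp
  rw [(summable_psiCoef_mul _ _ _).tsum_fun_fin_succ]
  have hinner : ∀ b, ∑' j, psiCoef N b k i j * Dker 0 (y - b) / 2 *
      ((∏ l, ω (i l) (j l)) * ω N b) =
        (ω N b * ∑' j, psiCoef N b k i j * ∏ l, ω (i l) (j l)) / 2 * Dker 0 (y - b) := by
    intro b
    rw [← tsum_mul_left, ← tsum_div_const, ← tsum_mul_right]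
    congr 1 with j
    ring
  simp only [psiCoef_snoc, hweight, hinner]
  rw [tsum_mul_Dker_zero]
  ring

lemma chaosTerm_succ_succ (N k : ℕ) (y : ℤ) :
    chaosTerm ω (N + 1) y (k + 1) =
      (chaosTerm ω N (y - 1) (k + 1) + chaosTerm ω N (y + 1) (k + 1)) / 2 +
        (ω N (y - 1) * chaosTerm ω N (y - 1) k -
          ω N (y + 1) * chaosTerm ω N (y + 1) k) / 2 := by
  rw [chaosTerm, sum_strictMonoTuples_succ]
  congr 1
  · simp only [chaosTerm, Function.comp_apply, tsum_psiCoef_castSucc, ← sum_div,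
      sum_add_distrib]
  · cases k with
    | zero => simpa [chaosTerm, strictMonoTuples] using tsum_psiCoef_snoc_zero ω N y default
    | succ k =>
      simp only [chaosTerm, tsum_psiCoef_snoc, mul_sum, ← sum_sub_distrib, sum_div]

lemma quenchedProb_eq_sum_chaosTerm (ε : ℝ) (N : ℕ) (y : ℤ) :
    quenchedProb ω ε N y = ∑ k ∈ range (N + 1), √ε ^ k * chaosTerm ω N y k := by
  induction N generalizing y with
  | zero => simp [quenchedProb_zero, chaosTerm, ssrwProb_zero]
  | succ N ih =>
    rw [quenchedProb_succ, ih, ih]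
    exact (sum_range_pow_mul_of_recursion (ssrwProb_succ N y) (chaosTerm_succ_succ ω N · y)
      (chaosTerm_eq_zero_of_le ω _ le_rfl) (chaosTerm_eq_zero_of_le ω _ le_rfl)).symm

end

theorem quenchedProb_polynomial_chaos_general (ω : ℕ → ℤ → ℝ) (ε : ℝ)
    (N : ℕ) (y : ℤ) :
    quenchedProb ω ε N y =
      ssrwProb N y +
        ∑ k ∈ Finset.range N,
          Real.sqrt ε ^ (k + 1) *
            ∑ i ∈ Finset.univ.filter
                (fun i : Fin (k + 1) → Fin N => ∀ a b : Fin (k + 1), a < b → i a < i b),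
              ∑' j : Fin (k + 1) → ℤ,
                psiCoef N y k i j * ∏ l : Fin (k + 1), ω (i l) (j l) := by
  rw [quenchedProb_eq_sum_chaosTerm, sum_range_succ', pow_zero, one_mul, add_comm]
  rfl

/-- Polynomial chaos expansion (Lemma 2.1) of the quenched RWRE transition
probability in the environment variables: the chaos of degree `k+1` carries the
factor `ε^{(k+1)/2}` and coefficients `ψ_{k+1}`. -/
theorem quenchedProb_polynomial_chaos (ω : ℕ → ℤ → ℝ) (ε : ℝ) (hε : 0 ≤ ε)
    (hbound : ∀ i j, |Real.sqrt ε * ω i j| ≤ 1) (N : ℕ) (hN : 1 ≤ N) (y : ℤ) :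
    quenchedProb ω ε N y =
      ssrwProb N y +
        ∑ k ∈ Finset.range N,
          Real.sqrt ε ^ (k + 1) *
            ∑ i ∈ Finset.univ.filter
                (fun i : Fin (k + 1) → Fin N => ∀ a b : Fin (k + 1), a < b → i a < i b),
              ∑' j : Fin (k + 1) → ℤ,
                psiCoef N y k i j * ∏ l : Fin (k + 1), ω (i l) (j l) :=
  quenchedProb_polynomial_chaos_general ω ε N y
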